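/- arXiv:2512.00081 — 3 statements merged into one kernel-verified Lean document; each statement's English description precedes it below -/
import Mathlib

section
/- The two reducts of eqW void void under the full Step relation, namely void and integrate (merge void void), are not joinable by root-level Step reductions: integrate (merge void void) is a Step normal form distinct from void, so local confluence fails for the full root Step relation at eqW void void. -/
inductive Trace : Type
  | void : Trace
  | delta : Trace → Trace
  | integrate : Trace → Trace
  | merge : Trace → Trace → Trace
  | app : Trace → Trace → Trace
  | recΔ : Trace → Trace → Trace → Trace
  | eqW : Trace → Trace → Trace
  deriving DecidableEq

open Trace

inductive Step : Trace → Trace → Prop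
  | merge_void_left (t : Trace) : Step (merge void t) t
  | merge_void_right (t : Trace) : Step (merge t void) t
  | merge_cancel (t : Trace) : Step (merge t t) t
  | rec_zero (b s : Trace) : Step (recΔ b s void) b
  | rec_succ (b s n : Trace) : Step (recΔ b s (delta n)) (app s (recΔ b s n))
  | int_delta (t : Trace) : Step (integrate (delta t)) void
  | eq_refl (a : Trace) : Step (eqW a a) void
  | eq_diff (a b : Trace) : Step (eqW a b) (integrate (merge a b))

def size : Trace → ℕ
  | void => 1
  | delta t => size t + 1
  | integrate t => size t + 1
  | merge a b => size a + size b + 1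
  | app a b => size a + size b + 1
  | recΔ a b c => size a + size b + size c + 1
  | eqW a b => size a + size b + 1

lemma void_nf {d : Trace} (h : Relation.ReflTransGen Step void d) : d = void := by
  induction h with
  | refl => rfl
  | tail _ h ih => subst ih; cases h

lemma imm_nf {d : Trace} (h : Relation.ReflTransGen Step (integrate (merge void void)) d) :
    d = integrate (merge void void) := by
  induction h with
  | refl => rfl
  | tail _ h ih => subst ih; cases h

theorem stmt1 :
    (¬ ∃ u, Step (integrate (merge void void)) u) ∧
    integrate (merge void void) ≠ void ∧
    ¬ ∃ d, Relation.ReflTransGen Step void d ∧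
      Relation.ReflTransGen Step (integrate (merge void void)) d := by
  refine ⟨?_, by simp, ?_⟩
  · rintro ⟨u, h⟩; cases h
  rintro ⟨d, hv, hi⟩
  have := void_nf hv
  have := imm_nf hi
  simp_all
end

section
/- The guarded SafeStep relation of KO7 is strongly normalizing: the converse relation SafeStepRev (u, t) := SafeStep t u is well-founded, as a consequence of the strict decrease of the computable triple measure (deltaFlag, kappaM, tau) in a well-founded lexicographic order. -/
open Trace

def deltaFlag : Trace → ℕ
  | recΔ _ _ (delta _) => 1
  | _ => 0

def kappaM : Trace → Multiset ℕ
  | void => 0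
  | delta t => kappaM t
  | integrate t => kappaM t
  | merge a b => kappaM a + kappaM b
  | app a b => kappaM a + kappaM b
  | recΔ b s n => size n ::ₘ (kappaM b + kappaM s + kappaM n)
  | eqW a b => kappaM a + kappaM b

def tau : Trace → ℕ := size

inductive SafeStep : Trace → Trace → Prop
  | merge_void_left (t : Trace) (h : deltaFlag t = 0) : SafeStep (merge void t) t
  | merge_void_right (t : Trace) (h : deltaFlag t = 0) : SafeStep (merge t void) t
  | merge_cancel (t : Trace) (h : kappaM t = 0) : SafeStep (merge t t) t
  | rec_zero (b s : Trace) : SafeStep (recΔ b s void) b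
  | rec_succ (b s n : Trace) : SafeStep (recΔ b s (delta n)) (app s (recΔ b s n))
  | int_delta (t : Trace) : SafeStep (integrate (delta t)) void
  | eq_refl (a : Trace) (h : kappaM a = 0) : SafeStep (eqW a a) void
  | eq_diff (a b : Trace) (h : a ≠ b) : SafeStep (eqW a b) (integrate (merge a b))

/-- Dershowitz–Manna strict order on multisets of naturals. -/
def DMLT (M N : Multiset ℕ) : Prop :=
  ∃ X Y Z : Multiset ℕ, X ≠ 0 ∧ N = Z + X ∧ M = Z + Y ∧ ∀ y ∈ Y, ∃ x ∈ X, y < x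

/-- Lexicographic order on (deltaFlag, kappaM, tau) triples. -/
def Lex3 (a b : ℕ × Multiset ℕ × ℕ) : Prop :=
  a.1 < b.1 ∨ (a.1 = b.1 ∧ (DMLT a.2.1 b.2.1 ∨ (a.2.1 = b.2.1 ∧ a.2.2 < b.2.2)))

def measure3 (t : Trace) : ℕ × Multiset ℕ × ℕ := (deltaFlag t, kappaM t, tau t)

lemma size_pos (t : Trace) : 0 < size t := by cases t <;> simp [size]

lemma stuck_void (u : Trace) : ¬ SafeStep void u := by intro h; cases h

lemma stuck_app (a b u : Trace) : ¬ SafeStep (app a b) u := by intro h; cases h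

lemma stuck_int_merge (a b u : Trace) : ¬ SafeStep (integrate (merge a b)) u := by
  intro h; cases h

lemma acc_stuck (t : Trace) (h : ∀ u, ¬ SafeStep t u) :
    Acc (fun u t => SafeStep t u) t :=
  Acc.intro t fun u hu => absurd hu (h u)

theorem stmt8 : WellFounded (fun u t => SafeStep t u) := by
  constructor
  have main : ∀ n t, size t ≤ n → Acc (fun u t => SafeStep t u) t := by
    intro n
    induction n with
    | zero => intro t ht; exact absurd ht (by have := size_pos t; omega)
    | succ n ih =>
      intro t ht
      constructor
      intro u hu
      cases hu with
      | merge_void_left h => exact ih u (by simp [size] at ht; omega)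
      | merge_void_right h => exact ih u (by simp [size] at ht; omega)
      | merge_cancel h =>
        have := size_pos u
        exact ih u (by simp [size] at ht; omega)
      | rec_zero b s =>
        have := size_pos s
        exact ih u (by simp [size] at ht; omega)
      | rec_succ b s m => exact acc_stuck _ (stuck_app _ _)
      | int_delta t' => exact acc_stuck _ stuck_void
      | eq_refl a h => exact acc_stuck _ stuck_void
      | eq_diff a b h => exact acc_stuck _ (stuck_int_merge _ _)
  exact fun t => main (size t) t le_rfl
end

section
/- There exists a total certified normalizer for SafeStep: a computable function normalizeSafe : Trace → Trace such that for every t, SafeStepStar t (normalizeSafe t) holds and normalizeSafe t is a SafeStep normal form (no u with SafeStep (normalizeSafe t) u). -/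
open Trace

def normT : Trace → Trace
  | void => void
  | delta t => delta t
  | integrate (delta _) => void
  | integrate t => integrate t
  | app a b => app a b
  | merge a b =>
    if a = void ∧ deltaFlag b = 0 then normT b
    else if b = void ∧ deltaFlag a = 0 then normT a
    else if a = b ∧ kappaM a = 0 then normT a
    else merge a b
  | recΔ b s void => normT b
  | recΔ b s (delta n) => app s (recΔ b s n)
  | recΔ b s n => recΔ b s n
  | eqW a b =>
    if a = b then (if kappaM a = 0 then void else eqW a b)
    else integrate (merge a b)

lemma norm_spec : ∀ t, Relation.ReflTransGen SafeStep t (normT t) ∧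
    ¬ ∃ u, SafeStep (normT t) u := by
  intro t
  induction t with
  | void => exact ⟨.refl, by rintro ⟨u, h⟩; cases h⟩
  | delta t ih => exact ⟨.refl, by rintro ⟨u, h⟩; cases h⟩
  | app a b iha ihb => exact ⟨.refl, by rintro ⟨u, h⟩; cases h⟩
  | integrate t ih =>
    cases t with
    | delta t =>
      exact ⟨.single (SafeStep.int_delta t), by rintro ⟨u, h⟩; cases h⟩
    | void => exact ⟨.refl, by rintro ⟨u, h⟩; cases h⟩
    | integrate t => exact ⟨.refl, by rintro ⟨u, h⟩; cases h⟩
    | merge a b => exact ⟨.refl, by rintro ⟨u, h⟩; cases h⟩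
    | app a b => exact ⟨.refl, by rintro ⟨u, h⟩; cases h⟩
    | recΔ a b c => exact ⟨.refl, by rintro ⟨u, h⟩; cases h⟩
    | eqW a b => exact ⟨.refl, by rintro ⟨u, h⟩; cases h⟩
  | merge a b iha ihb =>
    show Relation.ReflTransGen SafeStep (merge a b) _ ∧ _
    simp only [normT]
    by_cases h1 : a = void ∧ deltaFlag b = 0
    · rw [if_pos h1]
      exact ⟨.head (h1.1 ▸ SafeStep.merge_void_left b h1.2) (ihb).1, (ihb).2⟩
    · rw [if_neg h1]
      by_cases h2 : b = void ∧ deltaFlag a = 0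
      · rw [if_pos h2]
        exact ⟨.head (h2.1 ▸ SafeStep.merge_void_right a h2.2) (iha).1, (iha).2⟩
      · rw [if_neg h2]
        by_cases h3 : a = b ∧ kappaM a = 0
        · rw [if_pos h3]
          exact ⟨.head (h3.1 ▸ SafeStep.merge_cancel a h3.2) (iha).1, (iha).2⟩
        · rw [if_neg h3]
          refine ⟨.refl, ?_⟩
          rintro ⟨u, h⟩
          cases h with
          | merge_void_left t h => exact h1 ⟨rfl, h⟩
          | merge_void_right t h => exact h2 ⟨rfl, h⟩
          | merge_cancel t h => exact h3 ⟨rfl, h⟩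
  | recΔ b s n ihb ihs ihn =>
    cases n with
    | void => exact ⟨.head (SafeStep.rec_zero b s) ihb.1, ihb.2⟩
    | delta n =>
      exact ⟨.single (SafeStep.rec_succ b s n), by rintro ⟨u, h⟩; cases h⟩
    | integrate t => exact ⟨.refl, by rintro ⟨u, h⟩; cases h⟩
    | merge x y => exact ⟨.refl, by rintro ⟨u, h⟩; cases h⟩
    | app x y => exact ⟨.refl, by rintro ⟨u, h⟩; cases h⟩
    | recΔ x y z => exact ⟨.refl, by rintro ⟨u, h⟩; cases h⟩
    | eqW x y => exact ⟨.refl, by rintro ⟨u, h⟩; cases h⟩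
  | eqW a b iha ihb =>
    show Relation.ReflTransGen SafeStep (eqW a b) _ ∧ _
    simp only [normT]
    by_cases h1 : a = b
    · rw [if_pos h1]
      by_cases h2 : kappaM a = 0
      · rw [if_pos h2]
        exact ⟨.single (h1 ▸ SafeStep.eq_refl a h2), by rintro ⟨u, h⟩; cases h⟩
      · rw [if_neg h2]
        refine ⟨.refl, ?_⟩
        rintro ⟨u, h⟩
        cases h with
        | eq_refl a h => exact h2 h
        | eq_diff a b h => exact h h1
    · rw [if_neg h1]
      refine ⟨.single (SafeStep.eq_diff a b h1), ?_⟩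
      rintro ⟨u, h⟩
      cases h

theorem stmt9 :
    ∃ normalizeSafe : Trace → Trace,
      ∀ t, Relation.ReflTransGen SafeStep t (normalizeSafe t) ∧
        ¬ ∃ u, SafeStep (normalizeSafe t) u := ⟨normT, norm_spec⟩
end
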